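/- For the fundamental metric g of the 2D-monolayer Lagrangian, the vertical Cartan coefficients C^{i(1)}_{j(k)} = (g^{is}/2)·∂g_{js}/∂y^k (with (y¹,y²) = (ṙ,φ̇)) satisfy C^{1(1)}_{1(1)} = 3p r⁵ |V| / (m ṙ⁴ e^{−2|V|t/r} − 2p r⁵ |V| ṙ), and all other components C^{i(1)}_{j(k)} with (i,j,k) ≠ (1,1,1) vanish, at every point with r > 0, ṙ ≠ 0 and g₁₁ ≠ 0. -/

import Mathlib

/-- The fundamental metrical d-tensor g_{ij} of the 2D-monolayer Lagrangian. -/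
noncomputable def gE (m p V : ℝ) (i j : Fin 2) (t r φ rd φd : ℝ) : ℝ :=
  if i = 0 ∧ j = 0 then (m - 2 * p * r ^ 5 * |V| * Real.exp (2 * |V| * t / r) * (rd ^ 3)⁻¹) / 2
  else if i = 1 ∧ j = 1 then m * r ^ 2 / 2 else 0

/-- The inverse fundamental metric g^{ij}. -/
noncomputable def gI (m p V : ℝ) (i j : Fin 2) (t r φ rd φd : ℝ) : ℝ :=
  if i = 0 ∧ j = 0 then 2 / (m - 2 * p * r ^ 5 * |V| * Real.exp (2 * |V| * t / r) * (rd ^ 3)⁻¹)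
  else if i = 1 ∧ j = 1 then 2 / (m * r ^ 2) else 0

/-- The canonical nonlinear connection components N^{(q)}_{(1)k}. -/
noncomputable def NN (m p V : ℝ) (𝒰 : ℝ → ℝ → ℝ) (q k : Fin 2) (t r φ rd φd : ℝ) : ℝ :=
  if q = 0 then
    if k = 0 then
      -|V| / (2 * r) + (2 * |V| * t / r ^ 2 - 5 / r) * rd - 𝒰 t r * rd ^ 2
        + 3 * m * Real.exp (-(2 * |V| * t) / r) / (4 * p * |V| * r ^ 4) * rd ^ 2 * φd ^ 2
    else m * Real.exp (-(2 * |V| * t) / r) / (2 * p * |V| * r ^ 4) * rd ^ 3 * φd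
  else if k = 0 then φd / r else rd / r

/-- Partial derivative ∂F/∂x^k, with (x¹,x²) = (r,φ). -/
noncomputable def dx (k : Fin 2) (F : ℝ → ℝ → ℝ → ℝ → ℝ → ℝ) (t r φ rd φd : ℝ) : ℝ :=
  if k = 0 then deriv (fun a => F t a φ rd φd) r else deriv (fun a => F t r a rd φd) φ

/-- Partial derivative ∂F/∂y^k, with (y¹,y²) = (ṙ,φ̇). -/
noncomputable def dy (k : Fin 2) (F : ℝ → ℝ → ℝ → ℝ → ℝ → ℝ) (t r φ rd φd : ℝ) : ℝ :=
  if k = 0 then deriv (fun a => F t r φ a φd) rd else deriv (fun a => F t r φ rd a) φd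

/-- Horizontal derivative δF/δx^k = ∂F/∂x^k − N^{(q)}_{(1)k}·∂F/∂y^q. -/
noncomputable def del (m p V : ℝ) (𝒰 : ℝ → ℝ → ℝ) (k : Fin 2)
    (F : ℝ → ℝ → ℝ → ℝ → ℝ → ℝ) (t r φ rd φd : ℝ) : ℝ :=
  dx k F t r φ rd φd - ∑ q : Fin 2, NN m p V 𝒰 q k t r φ rd φd * dy q F t r φ rd φd

/-- Temporal Cartan coefficients G^k_{j1} = (g^{ks}/2)·∂g_{sj}/∂t. -/
noncomputable def Gtime (m p V : ℝ) (k j : Fin 2) (t r φ rd φd : ℝ) : ℝ :=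
  ∑ s : Fin 2, gI m p V k s t r φ rd φd / 2 * deriv (fun a => gE m p V s j a r φ rd φd) t

/-- Vertical Cartan coefficients C^{i(1)}_{j(k)} = (g^{is}/2)·∂g_{js}/∂y^k. -/
noncomputable def Cv (m p V : ℝ) (i j k : Fin 2) (t r φ rd φd : ℝ) : ℝ :=
  ∑ s : Fin 2, gI m p V i s t r φ rd φd / 2 * dy k (gE m p V j s) t r φ rd φd

/-- Spatial Cartan coefficients
L^i_{jk} = (g^{is}/2)·(δg_{js}/δx^k + δg_{ks}/δx^j − δg_{jk}/δx^s). -/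
noncomputable def Lc (m p V : ℝ) (𝒰 : ℝ → ℝ → ℝ) (i j k : Fin 2) (t r φ rd φd : ℝ) : ℝ :=
  ∑ s : Fin 2, gI m p V i s t r φ rd φd / 2 *
    (del m p V 𝒰 k (gE m p V j s) t r φ rd φd + del m p V 𝒰 j (gE m p V k s) t r φ rd φd
      - del m p V 𝒰 s (gE m p V j k) t r φ rd φd)


lemma deriv_g00 (m c rd : ℝ) (hrd : rd ≠ 0) :
    deriv (fun a : ℝ => m - c * (a ^ 3)⁻¹) rd = 3 * c / rd ^ 4 := by
  have h1 : HasDerivAt (fun a : ℝ => (a ^ 3)⁻¹) (-(3 * rd ^ 2) / (rd ^ 3) ^ 2) rd := by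
    exact ((hasDerivAt_pow 3 rd).inv (pow_ne_zero 3 hrd)).congr_deriv (by norm_num)
  have h2 : HasDerivAt (fun a : ℝ => m - c * (a ^ 3)⁻¹)
      (0 - c * (-(3 * rd ^ 2) / (rd ^ 3) ^ 2)) rd :=
    (hasDerivAt_const rd m).sub (h1.const_mul c)
  rw [h2.deriv]
  field_simp
  ring

/-- the vertical Cartan coefficients of the 2D-monolayer metric. -/
theorem stmt7 (m p V : ℝ) (hm : 0 < m) (hp : 0 < p) (hV : V ≠ 0)
    (t r φ rd φd : ℝ) (hr : 0 < r) (hrd : rd ≠ 0)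
    (hg11 : (m - 2 * p * r ^ 5 * |V| * Real.exp (2 * |V| * t / r) * (rd ^ 3)⁻¹) / 2 ≠ 0) :
    Cv m p V 0 0 0 t r φ rd φd
        = 3 * p * r ^ 5 * |V|
          / (m * rd ^ 4 * Real.exp (-(2 * |V| * t) / r) - 2 * p * r ^ 5 * |V| * rd)
      ∧ ∀ i j k : Fin 2, ¬(i = 0 ∧ j = 0 ∧ k = 0) → Cv m p V i j k t r φ rd φd = 0 := by
  have hD : m - 2 * p * r ^ 5 * |V| * Real.exp (2 * |V| * t / r) * (rd ^ 3)⁻¹ ≠ 0 := by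
    intro h; exact hg11 (by rw [h]; ring)
  have hE := Real.exp_ne_zero (2 * |V| * t / r)
  have hne : -(2 * |V| * t) / r = -(2 * |V| * t / r) := by ring
  constructor
  · simp only [Cv, Fin.sum_univ_two, gI, gE, dy]
    norm_num
    have hinv : deriv (fun x : ℝ => (x ^ 3)⁻¹) rd = -(3 * rd ^ 2) / (rd ^ 3) ^ 2 := by
      exact (((hasDerivAt_pow 3 rd).inv (pow_ne_zero 3 hrd)).congr_deriv (by norm_num)).deriv
    rw [hinv,
      hne, Real.exp_neg]
    have hD2 : m * rd ^ 4 * (Real.exp (2 * |V| * t / r))⁻¹ - 2 * p * r ^ 5 * |V| * rd ≠ 0 := by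
      have h : m * rd ^ 4 * (Real.exp (2 * |V| * t / r))⁻¹ - 2 * p * r ^ 5 * |V| * rd
          = (Real.exp (2 * |V| * t / r))⁻¹ * rd ^ 4 *
            (m - 2 * p * r ^ 5 * |V| * Real.exp (2 * |V| * t / r) * (rd ^ 3)⁻¹) := by
        field_simp
      rw [h]
      exact mul_ne_zero (mul_ne_zero (inv_ne_zero hE) (pow_ne_zero 4 hrd)) hD
    have hD3 : m * rd ^ 3 - 2 * p * r ^ 5 * |V| * Real.exp (2 * |V| * t / r) ≠ 0 := by
      intro h
      apply hD
      field_simp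
      linarith
    rw [eq_div_iff hD2]
    field_simp [hD3]
  · intro i j k h
    fin_cases i <;> fin_cases j <;> fin_cases k <;>
      simp_all [Cv, Fin.sum_univ_two, gI, gE, dy]
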